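/- Let r, k, s, H2 be positive integers with k < r, -2 ≤ k²·H2 - 2·r·s < 2·r - 2, and H2 > 2·r. Then (r - s)² + k²·(2·H2 + 4) < (r + s + 2)². -/

import Mathlib

/-!
By the difference of squares `(r + s + 2)² - (r - s)² = 4 (r + 1) (s + 1)`, the claim is
`k² H₂ - 2 r s < 2 (r + s + 1) - 2 k²`. Since `H₂ > 2 r`, the hypothesis `k² H₂ - 2 r s < 2 r - 2`
gives `2 r (k² - 1) < 2 r s`, i.e. `k² < s + 1`, and then the claim follows from the same hypothesis.
-/

section

variable {α : Type*} [CommRing α] [LinearOrder α] [IsStrictOrderedRing α]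

theorem sub_sq_add_lt_add_add_two_sq_iff (r s c : α) :
    (r - s) ^ 2 + c < (r + s + 2) ^ 2 ↔ c < 4 * (r + 1) * (s + 1) := by
  rw [show (r + s + 2) ^ 2 = (r - s) ^ 2 + 4 * (r + 1) * (s + 1) by ring, add_lt_add_iff_left]

theorem sq_lt_add_one_of_sq_mul_sub_lt {r k s H : α} (hr : 0 < r) (hH : 2 * r ≤ H)
    (h : k ^ 2 * H - 2 * r * s < 2 * r - 2) : k ^ 2 < s + 1 := by
  have hkH : k ^ 2 * (2 * r) ≤ k ^ 2 * H := mul_le_mul_of_nonneg_left hH (sq_nonneg k)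
  have : r * (k ^ 2 - 1) < r * s := by linarith
  linarith [lt_of_mul_lt_mul_left this hr.le]

end

theorem stmt_2_general (r k s H2 : ℤ) (hr : 0 < r) (h2 : k ^ 2 * H2 - 2 * r * s < 2 * r - 2)
    (hH2 : 2 * r < H2) :
    (r - s) ^ 2 + k ^ 2 * (2 * H2 + 4) < (r + s + 2) ^ 2 := by
  have hks : k ^ 2 < s + 1 := sq_lt_add_one_of_sq_mul_sub_lt hr hH2.le h2
  rw [sub_sq_add_lt_add_add_two_sq_iff]
  linarith

theorem stmt_2 (r k s H2 : ℤ) (hr : 0 < r) (hk : 0 < k) (hs : 0 < s) (hH : 0 < H2)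
    (hkr : k < r) (h1 : -2 ≤ k ^ 2 * H2 - 2 * r * s) (h2 : k ^ 2 * H2 - 2 * r * s < 2 * r - 2)
    (hH2 : 2 * r < H2) :
    (r - s) ^ 2 + k ^ 2 * (2 * H2 + 4) < (r + s + 2) ^ 2 :=
  stmt_2_general r k s H2 hr h2 hH2
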